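/- arXiv:1412.7252 — 4 statements merged into one kernel-verified Lean document; each statement's English description precedes it below -/
import Mathlib

section
/- Two great-circle arcs on the unit sphere S², each of length strictly greater than π, that share a common endpoint must intersect in at least two points. -/
/-!
Parametrize each arc by arc length from its start. Since both arcs are longer than `π`, each
contains not only its endpoints but also their antipodes (at parameter `π`, resp. `L - π`).
So the shared endpoint `x` and its antipode `-x` are two common points, distinct because
`x` lies on the unit sphere.
-/

/-- The point at angle `t` on the great circle through the orthonormal pair `p, q`. -/
noncomputable def arcPt (p q : EuclideanSpace ℝ (Fin 3)) (t : ℝ) : EuclideanSpace ℝ (Fin 3) :=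
  Real.cos t • p + Real.sin t • q

/-- `p, q` is an orthonormal pair in `ℝ³` (so `arcPt p q` parametrizes a great circle
of the unit sphere by arc length). -/
def IsFrame (p q : EuclideanSpace ℝ (Fin 3)) : Prop :=
  ‖p‖ = 1 ∧ ‖q‖ = 1 ∧ inner ℝ p q = (0 : ℝ)

/-- The great-circle arc of length `L` starting at `p` in the direction of `q`. -/
noncomputable def arcSet (p q : EuclideanSpace ℝ (Fin 3)) (L : ℝ) :
    Set (EuclideanSpace ℝ (Fin 3)) :=
  arcPt p q '' Set.Icc 0 L

lemma ne_neg_of_ne_zero {E : Type*} [AddCommGroup E] [Module ℝ E] {x : E} (hx : x ≠ 0) :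
    x ≠ -x := by
  intro h
  have h2 : (2 : ℝ) • x = 0 := by
    rw [two_smul]
    nth_rw 1 [h]
    exact neg_add_cancel x
  exact hx ((smul_eq_zero.mp h2).resolve_left two_ne_zero)

section Arc

variable (p q : EuclideanSpace ℝ (Fin 3))

lemma arcPt_zero : arcPt p q 0 = p := by
  simp [arcPt]

lemma arcPt_add_pi (t : ℝ) : arcPt p q (t + Real.pi) = -arcPt p q t := by
  simp only [arcPt, Real.cos_add_pi, Real.sin_add_pi, neg_smul, neg_add]

lemma norm_arcPt {p q : EuclideanSpace ℝ (Fin 3)} (hf : IsFrame p q) (t : ℝ) :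
    ‖arcPt p q t‖ = 1 := by
  obtain ⟨hp, hq, hpq⟩ := hf
  have hsq : ‖arcPt p q t‖ ^ 2 = 1 := by
    rw [arcPt, norm_add_sq_real, norm_smul, norm_smul, real_inner_smul_left,
      real_inner_smul_right, hpq, hp, hq]
    simp [sq_abs]
  exact (pow_eq_one_iff_of_nonneg (norm_nonneg _) two_ne_zero).mp hsq

lemma norm_eq_one_of_mem_endpoints {p q : EuclideanSpace ℝ (Fin 3)} (hf : IsFrame p q)
    {L : ℝ} {x : EuclideanSpace ℝ (Fin 3)} (hx : x ∈ ({p, arcPt p q L} : Set _)) :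
    ‖x‖ = 1 := by
  rcases hx with hx | hx <;> subst x
  · exact hf.1
  · exact norm_arcPt hf L

variable {L : ℝ} (hL : Real.pi < L)
include hL

lemma mem_arcSet_of_mem_endpoints {x : EuclideanSpace ℝ (Fin 3)}
    (hx : x ∈ ({p, arcPt p q L} : Set _)) : x ∈ arcSet p q L := by
  have := Real.pi_pos
  rcases hx with hx | hx <;> subst x
  · exact ⟨0, ⟨le_rfl, by linarith⟩, arcPt_zero p q⟩
  · exact ⟨L, ⟨by linarith, le_rfl⟩, rfl⟩

lemma neg_mem_arcSet_of_mem_endpoints {x : EuclideanSpace ℝ (Fin 3)}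
    (hx : x ∈ ({p, arcPt p q L} : Set _)) : -x ∈ arcSet p q L := by
  have := Real.pi_pos
  rcases hx with hx | hx <;> subst x
  · refine ⟨Real.pi, ⟨by linarith, by linarith⟩, ?_⟩
    simpa [arcPt_zero] using arcPt_add_pi p q 0
  · refine ⟨L - Real.pi, ⟨by linarith, by linarith⟩, ?_⟩
    rw [← neg_neg (arcPt p q (L - Real.pi)), ← arcPt_add_pi, sub_add_cancel]

end Arc

theorem stmt0_general (p q p' q' : EuclideanSpace ℝ (Fin 3)) (L L' : ℝ)
    (hf : IsFrame p q)
    (hL : Real.pi < L) (hL' : Real.pi < L')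
    (hshare : ∃ x, x ∈ ({p, arcPt p q L} : Set (EuclideanSpace ℝ (Fin 3))) ∧
      x ∈ ({p', arcPt p' q' L'} : Set (EuclideanSpace ℝ (Fin 3)))) :
    ∃ x y, x ≠ y ∧ x ∈ arcSet p q L ∩ arcSet p' q' L' ∧
      y ∈ arcSet p q L ∩ arcSet p' q' L' := by
  obtain ⟨x, hx, hx'⟩ := hshare
  have hx0 : x ≠ 0 := norm_ne_zero_iff.mp (by rw [norm_eq_one_of_mem_endpoints hf hx]; norm_num)
  refine ⟨x, -x, ne_neg_of_ne_zero hx0, ?_, ?_⟩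
  · exact ⟨mem_arcSet_of_mem_endpoints p q hL hx, mem_arcSet_of_mem_endpoints p' q' hL' hx'⟩
  · exact ⟨neg_mem_arcSet_of_mem_endpoints p q hL hx,
      neg_mem_arcSet_of_mem_endpoints p' q' hL' hx'⟩

/-- Two great-circle arcs on the unit sphere, each of arc length strictly greater than `π`,
that share a common endpoint, intersect in at least two points. -/
theorem stmt0 (p q p' q' : EuclideanSpace ℝ (Fin 3)) (L L' : ℝ)
    (hf : IsFrame p q) (hf' : IsFrame p' q')
    (hL : Real.pi < L) (hL' : Real.pi < L')
    (hshare : ∃ x, x ∈ ({p, arcPt p q L} : Set (EuclideanSpace ℝ (Fin 3))) ∧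
      x ∈ ({p', arcPt p' q' L'} : Set (EuclideanSpace ℝ (Fin 3)))) :
    ∃ x y, x ≠ y ∧ x ∈ arcSet p q L ∩ arcSet p' q' L' ∧
      y ∈ arcSet p q L ∩ arcSet p' q' L' :=
  stmt0_general p q p' q' L L' hf hL hL' hshare
end

section
/- A cycle of odd length in which any two (cyclically) consecutive distinct long edges are separated by an odd number of short edges, and in which no two long edges are adjacent, contains at most one long edge. -/
/-!
Measure positions from a long edge `i`. Consecutive long edges are an even distance apart, so
every long edge sits at an even distance from `i`; going once around the cycle and returning to
`i` then forces the odd length `m` to be even. The one exception is a single gap of length `m`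
from `i` back to itself, which happens only when `i` is the only long edge.
-/

theorem even_of_consecutive_gaps_even {P : ℕ → Prop} (h0 : P 0)
    (hgap : ∀ a b, a < b → P a → P b → (∀ c, a < c → c < b → ¬ P c) → Even (b - a))
    (n : ℕ) (hn : P n) : Even n := by
  classical
  induction n using Nat.strong_induction_on with
  | _ b ih =>
    rcases Nat.eq_zero_or_pos b with rfl | hb
    · exact .zero
    set a := Nat.findGreatest P (b - 1)
    have ha : P a := Nat.findGreatest_spec (Nat.zero_le _) h0
    have hab : a < b := by
      have := Nat.findGreatest_le (P := P) (b - 1)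
      omega
    have hstep : Even (b - a) :=
      hgap a b hab ha hn fun c hac hcb => Nat.findGreatest_is_greatest hac (by omega)
    simpa only [Nat.add_sub_cancel' hab.le] using (ih a hab ha).add hstep

theorem even_gap_of_consecutive_long {m : ℕ} {long : ZMod m → Prop}
    (hsep : ∀ (i : ZMod m) (k : ℕ), 0 < k → k < m → long i → long (i + (k : ZMod m)) →
      (∀ j : ℕ, 0 < j → j < k → ¬ long (i + (j : ZMod m))) → Odd (k - 1))
    (i : ZMod m) {a b : ℕ} (hab : a < b) (hgap : b - a < m)
    (ha : long (i + a)) (hb : long (i + b))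
    (hbetween : ∀ c, a < c → c < b → ¬ long (i + c)) : Even (b - a) := by
  have hodd : Odd (b - a - 1) := by
    refine hsep (i + a) (b - a) (by omega) hgap ha ?_ fun c hc hcb => ?_
    · rwa [Nat.cast_sub hab.le, add_add_sub_cancel]
    · simpa only [Nat.cast_add, add_assoc] using hbetween (a + c) (by omega) (by omega)
  obtain ⟨t, ht⟩ := hodd
  exact ⟨t + 1, by omega⟩

theorem stmt7_general (m : ℕ) (hm : Odd m) (long : ZMod m → Prop)
    (hsep : ∀ (i : ZMod m) (k : ℕ), 0 < k → k < m → long i → long (i + (k : ZMod m)) →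
      (∀ j : ℕ, 0 < j → j < k → ¬ long (i + (j : ZMod m))) → Odd (k - 1)) :
    ∀ i j : ZMod m, long i → long j → i = j := by
  intro i j hi hj
  by_contra hne
  have : NeZero m := ⟨by rintro rfl; simp at hm⟩
  have hpos : 0 < (j - i).val := ZMod.val_pos.mpr (sub_ne_zero.mpr (Ne.symm hne))
  have hj' : long (i + (j - i).val) := by rwa [ZMod.natCast_zmod_val, add_sub_cancel]
  have hi' : long (i + m) := by simpa only [ZMod.natCast_self, add_zero] using hi
  have hm_even : Even m := by
    refine even_of_consecutive_gaps_even (P := fun a => a ≤ m ∧ long (i + a))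
      ⟨Nat.zero_le _, by simpa using hi⟩ (fun a b hab ha hb hbetween => ?_) m ⟨le_rfl, hi'⟩
    by_cases hgap : b - a < m
    · exact even_gap_of_consecutive_long hsep i hab hgap ha.2 hb.2
        fun c hac hcb hc => hbetween c hac hcb ⟨by omega, hc⟩
    · -- the gap would be the whole cycle, but `j` lies strictly inside it
      have hjm := ZMod.val_lt (j - i)
      have hbm := hb.1
      exact absurd ⟨hjm.le, hj'⟩ (hbetween _ (by omega) (by omega))
  exact Nat.not_even_iff_odd.mpr hm hm_even

/-- Consider a cyclic sequence of `m` edges (indexed by `ZMod m`), each labeled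
long (`long i`) or short.  Suppose no two cyclically adjacent edges are both long, and
any two cyclically consecutive distinct long edges are separated by an odd number of
short edges: if the edges at positions `i` and `i + k` (for some `0 < k < m`) are long
and all edges strictly between them are short, then `k - 1` is odd.  If `m` is odd,
then at most one edge is long. -/
theorem stmt7 (m : ℕ) (hm : Odd m) (long : ZMod m → Prop)
    (hadj : ∀ i : ZMod m, ¬ (long i ∧ long (i + 1)))
    (hsep : ∀ (i : ZMod m) (k : ℕ), 0 < k → k < m → long i → long (i + (k : ZMod m)) →
      (∀ j : ℕ, 0 < j → j < k → ¬ long (i + (j : ZMod m))) → Odd (k - 1)) :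
    ∀ i j : ZMod m, long i → long j → i = j :=
  stmt7_general m hm long hsep
end

section
/- Let e_1 e_2 … e_{2n} be a cyclic sequence of great-circle arcs on S² (n ≥ 3), each of length strictly less than π, forming a closed cycle (the endpoint of e_i is the starting point of e_{i+1}, indices mod 2n), such that every non-adjacent pair of arcs crosses transversally exactly once and adjacent arcs meet only at their common endpoint, and such that all consecutive crossing orientations χ(e_i, e_{i+1}) are equal to +1. Then a contradiction follows; i.e., such a configuration does not exist. -/
/-- The interior of that arc. -/
noncomputable def arcInt (p q : EuclideanSpace ℝ (Fin 3)) (L : ℝ) :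
    Set (EuclideanSpace ℝ (Fin 3)) :=
  arcPt p q '' Set.Ioo 0 L

/-- The (unique) great circle containing the arc with frame `p, q`. -/
def frameCircle (p q : EuclideanSpace ℝ (Fin 3)) : Set (EuclideanSpace ℝ (Fin 3)) :=
  {x | ‖x‖ = 1 ∧ x ∈ Submodule.span ℝ ({p, q} : Set (EuclideanSpace ℝ (Fin 3)))}

/-- Scalar triple product of three vectors of `ℝ³`. -/
def triple (u v w : EuclideanSpace ℝ (Fin 3)) : ℝ :=
  u 0 * (v 1 * w 2 - v 2 * w 1) - u 1 * (v 0 * w 2 - v 2 * w 0) + u 2 * (v 0 * w 1 - v 1 * w 0)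

/-- The unit tangent direction of the arc with frame `p, q` at the parameter `t`. -/
noncomputable def arcTangent (p q : EuclideanSpace ℝ (Fin 3)) (t : ℝ) :
    EuclideanSpace ℝ (Fin 3) :=
  (-Real.sin t) • p + Real.cos t • q

/-!
Measure heights over the great circle `C₀` of the arc `e₀` by `x ↦ triple x (p 0) (q 0)`. The
vertices `p 0` and `p 1` lie on `C₀`, and the positive orientations at them put `p 2` and
`p (2n-1)` strictly above `C₀`. Each arc `eₖ` with `2 ≤ k ≤ 2n-2` crosses `e₀` in its interior and
lies on another great circle, so the height along it, vanishing at the crossing parameter `s`,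
is `K sin (s - t)` with `K ≠ 0`; as the arc is shorter than `π`, its endpoints lie strictly on
opposite sides of `C₀`. Hence the heights of `p 2, …, p (2n-1)` alternate in sign, and since
`2n - 3` is odd, `p (2n-1)` lies below `C₀`.
-/

open Real Submodule Module

section Triple

variable (p q w z : EuclideanSpace ℝ (Fin 3))

lemma triple_self_left : triple p p q = 0 := by
  simp only [triple]; ring

lemma triple_self_right : triple q p q = 0 := by
  simp only [triple]; ring

lemma triple_swap : triple p w z = -triple p z w := by
  simp only [triple]; ring

lemma triple_arcPt (t : ℝ) :
    triple (arcPt p q t) w z = cos t * triple p w z + sin t * triple q w z := by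
  simp only [triple, arcPt, PiLp.add_apply, PiLp.smul_apply, smul_eq_mul]; ring

lemma triple_arcTangent (t : ℝ) :
    triple (arcTangent p q t) w z = -sin t * triple p w z + cos t * triple q w z := by
  simp only [triple, arcTangent, PiLp.add_apply, PiLp.smul_apply, smul_eq_mul]; ring

lemma triple_arcTangent_arcPt (t : ℝ) :
    triple (arcTangent p q t) w (arcPt p q t) = triple w p q := by
  simp only [triple, arcTangent, arcPt, PiLp.add_apply, PiLp.smul_apply, smul_eq_mul]
  linear_combination (w 0 * (p 1 * q 2 - p 2 * q 1) - w 1 * (p 0 * q 2 - p 2 * q 0)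
    + w 2 * (p 0 * q 1 - p 1 * q 0)) * sin_sq_add_cos_sq t

end Triple

namespace IsFrame

variable {p q : EuclideanSpace ℝ (Fin 3)}

lemma linearIndependent (hf : IsFrame p q) : LinearIndependent ℝ ![p, q] := by
  obtain ⟨hp, hq, hpq⟩ := hf
  refine LinearIndependent.pair_iff.mpr fun s t hst => ?_
  have hp' := congrArg (inner ℝ p) hst
  have hq' := congrArg (inner ℝ q) hst
  simp only [inner_add_right, inner_smul_right, real_inner_self_eq_norm_sq, hp, hq, hpq,
    real_inner_comm p q, inner_zero_right] at hp' hq'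
  constructor <;> linarith

lemma finrank_span (hf : IsFrame p q) : finrank ℝ (span ℝ {p, q}) = 2 := by
  have h := finrank_span_eq_card hf.linearIndependent
  rwa [Matrix.range_cons_cons_empty, Fintype.card_fin] at h

lemma mem_span_of_triple_eq_zero (hf : IsFrame p q) {x : EuclideanSpace ℝ (Fin 3)}
    (hx : triple x p q = 0) : x ∈ span ℝ {p, q} := by
  obtain ⟨hp, hq, hpq⟩ := hf
  have hp2 := real_inner_self_eq_norm_sq p
  have hq2 := real_inner_self_eq_norm_sq q
  simp only [PiLp.inner_apply, Fin.sum_univ_three, hp, hq, RCLike.inner_apply, conj_trivial]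
    at hp2 hq2 hpq
  simp only [triple] at hx
  rw [mem_span_pair]
  refine ⟨inner ℝ x p, inner ℝ x q, ?_⟩
  simp only [PiLp.inner_apply, Fin.sum_univ_three, RCLike.inner_apply, conj_trivial]
  set P := p 0 * p 0 + p 1 * p 1 + p 2 * p 2
  set R := q 0 * p 0 + q 1 * p 1 + q 2 * p 2
  set xp := p 0 * x 0 + p 1 * x 1 + p 2 * x 2
  set xq := q 0 * x 0 + q 1 * x 1 + q 2 * x 2
  -- Lagrange's identity `x (|p|²|q|² - (p⬝q)²) = triple x p q • (p × q)`
  --   `+ (x⬝p) • (|q|² p - (p⬝q) q) + (x⬝q) • (|p|² q - (p⬝q) p)`, read coordinatewise.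
  ext i
  fin_cases i <;>
    simp only [PiLp.add_apply, PiLp.smul_apply, smul_eq_mul, Fin.zero_eta, Fin.mk_one, Fin.reduceFinMk]
  · linear_combination (x 0 - xq * q 0) * hp2 + (x 0 * P - xp * p 0) * hq2
      + (xp * q 0 + xq * p 0 - x 0 * R) * hpq - (p 1 * q 2 - p 2 * q 1) * hx
  · linear_combination (x 1 - xq * q 1) * hp2 + (x 1 * P - xp * p 1) * hq2
      + (xp * q 1 + xq * p 1 - x 1 * R) * hpq - (p 2 * q 0 - p 0 * q 2) * hx
  · linear_combination (x 2 - xq * q 2) * hp2 + (x 2 * P - xp * p 2) * hq2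
      + (xp * q 2 + xq * p 2 - x 2 * R) * hpq - (p 0 * q 1 - p 1 * q 0) * hx

lemma frameCircle_eq {p' q' : EuclideanSpace ℝ (Fin 3)} (hf : IsFrame p q) (hf' : IsFrame p' q')
    (hp' : triple p' p q = 0) (hq' : triple q' p q = 0) : frameCircle p' q' = frameCircle p q := by
  have hle : span ℝ {p', q'} ≤ span ℝ {p, q} := by
    rw [span_le, Set.insert_subset_iff, Set.singleton_subset_iff]
    exact ⟨hf.mem_span_of_triple_eq_zero hp', hf.mem_span_of_triple_eq_zero hq'⟩
  have hspan := eq_of_le_of_finrank_eq hle (by rw [hf.finrank_span, hf'.finrank_span])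
  simp only [frameCircle, hspan]

end IsFrame

lemma sinusoid_eq_mul_sin_sub {a b s : ℝ} (hs : cos s * a + sin s * b = 0) (t : ℝ) :
    cos t * a + sin t * b = (sin s * a - cos s * b) * sin (s - t) := by
  rw [sin_sub]
  linear_combination (cos s * cos t + sin s * sin t) * hs
    - (cos t * a + sin t * b) * sin_sq_add_cos_sq s

section Arc

variable {p q w z : EuclideanSpace ℝ (Fin 3)} {L : ℝ}

lemma triple_arcPt_self (t : ℝ) : triple (arcPt p q t) p q = 0 := by
  rw [triple_arcPt, triple_self_left, triple_self_right]; ring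

lemma triple_arcPt_of_triple_eq_zero (hp : triple p w z = 0) (t : ℝ) :
    triple (arcPt p q t) w z = sin t * triple q w z := by
  rw [triple_arcPt, hp]; ring

lemma triple_eq_of_triple_arcPt_eq_zero (hL : triple (arcPt p q L) w z = 0) :
    triple p w z = -sin L * triple (arcTangent p q L) w z := by
  rw [triple_arcPt] at hL
  rw [triple_arcTangent]
  linear_combination cos L * hL - triple p w z * sin_sq_add_cos_sq L

lemma triple_mul_triple_arcPt_neg (hf : IsFrame p q) (hf₀ : IsFrame w z) (hLπ : L < π)
    (hne : frameCircle p q ≠ frameCircle w z) {x : EuclideanSpace ℝ (Fin 3)}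
    (hx : x ∈ arcInt p q L) (hxwz : triple x w z = 0) :
    triple p w z * triple (arcPt p q L) w z < 0 := by
  obtain ⟨s, ⟨hs₀, hsL⟩, rfl⟩ := hx
  rw [triple_arcPt] at hxwz
  have hsinusoid := sinusoid_eq_mul_sin_sub hxwz
  generalize sin s * triple p w z - cos s * triple q w z = K at hsinusoid
  have hK : K ≠ 0 := by
    rintro rfl
    refine hne (hf₀.frameCircle_eq hf ?_ ?_)
    · simpa using hsinusoid 0
    · simpa using hsinusoid (π / 2)
  have hp : triple p w z = K * sin s := by simpa using hsinusoid 0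
  have hend : triple (arcPt p q L) w z = K * sin (s - L) := by
    rw [triple_arcPt]; exact hsinusoid L
  have hsin_s : 0 < sin s := sin_pos_of_pos_of_lt_pi hs₀ (by linarith)
  have hsin_sL : sin (s - L) < 0 := sin_neg_of_neg_of_neg_pi_lt (by linarith) (by linarith)
  calc triple p w z * triple (arcPt p q L) w z = K ^ 2 * (sin s * sin (s - L)) := by
        rw [hp, hend]; ring
    _ < 0 := mul_neg_of_pos_of_neg (sq_pos_of_ne_zero hK) (mul_neg_of_pos_of_neg hsin_s hsin_sL)

variable {p' q' : EuclideanSpace ℝ (Fin 3)} {L' : ℝ} (hvertex : arcPt p q L = p')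
  (horient : 0 < triple (arcTangent p q L) q' p')
include hvertex horient

lemma triple_arcPt_pos_of_orient (hL' : 0 < L' ∧ L' < π) : 0 < triple (arcPt p' q' L') p q := by
  rw [← hvertex, triple_arcTangent_arcPt] at horient
  rw [triple_arcPt_of_triple_eq_zero (hvertex ▸ triple_arcPt_self L)]
  exact mul_pos (sin_pos_of_pos_of_lt_pi hL'.1 hL'.2) horient

lemma triple_pos_of_orient (hL : 0 < L ∧ L < π) : 0 < triple p p' q' := by
  rw [triple_swap, neg_pos] at horient
  rw [triple_eq_of_triple_arcPt_eq_zero (by rw [hvertex]; exact triple_self_left _ _)]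
  exact mul_pos_of_neg_of_neg (neg_neg_of_pos (sin_pos_of_pos_of_lt_pi hL.1 hL.2)) horient

end Arc

lemma neg_one_pow_mul_pos_of_mul_succ_neg {a : ℕ → ℝ} {m M : ℕ}
    (ha : ∀ k, m ≤ k → k < M → a k * a (k + 1) < 0) (hm : 0 < a m) :
    ∀ j, m + j ≤ M → 0 < (-1) ^ j * a (m + j)
  | 0, _ => by simpa
  | j + 1, hj => by
    have ih := neg_one_pow_mul_pos_of_mul_succ_neg ha hm j (by omega)
    have hneg := ha (m + j) (by omega) (by omega)
    have hsq : ((-1 : ℝ) ^ j) ^ 2 = 1 := by rw [← pow_mul, mul_comm, pow_mul]; norm_num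
    rw [pow_succ, ← add_assoc]
    nlinarith

lemma ZMod.natCast_ne_natCast_of_lt {m a b : ℕ} (ha : a < m) (hb : b < m) (hab : a ≠ b) :
    (a : ZMod m) ≠ b := by
  rwa [Ne, ZMod.natCast_eq_natCast_iff', Nat.mod_eq_of_lt ha, Nat.mod_eq_of_lt hb]

theorem stmt9_general (n : ℕ) (hn : 3 ≤ n)
    (p q : ZMod (2 * n) → EuclideanSpace ℝ (Fin 3)) (L : ZMod (2 * n) → ℝ)
    (hframe : ∀ i, IsFrame (p i) (q i))
    (hshort : ∀ i, 0 < L i ∧ L i < Real.pi)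
    (hclosed : ∀ i, arcPt (p i) (q i) (L i) = p (i + 1))
    (hcross : ∀ i j : ZMod (2 * n), i ≠ j → i + 1 ≠ j → j + 1 ≠ i →
      frameCircle (p i) (q i) ≠ frameCircle (p j) (q j) ∧
      ∃ x, arcSet (p i) (q i) (L i) ∩ arcSet (p j) (q j) (L j) = {x} ∧
        x ∈ arcInt (p i) (q i) (L i) ∧ x ∈ arcInt (p j) (q j) (L j))
    (horient : ∀ i, 0 < triple (arcTangent (p i) (q i) (L i)) (q (i + 1)) (p (i + 1))) :
    False := by
  have : NeZero (2 * n) := ⟨by omega⟩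
  set h : ℕ → ℝ := fun k => triple (p k) (p 0) (q 0) with h_def
  have h_succ (k : ℕ) : h (k + 1) = triple (arcPt (p k) (q k) (L k)) (p 0) (q 0) := by
    simp only [h_def, Nat.cast_succ, hclosed]
  have h_two : 0 < h 2 := by
    rw [h_succ, Nat.cast_one]
    exact triple_arcPt_pos_of_orient (by simpa using hclosed 0) (by simpa using horient 0)
      (hshort 1)
  have h_last : 0 < h (2 * n - 1) := by
    set i : ZMod (2 * n) := ((2 * n - 1 : ℕ) : ZMod (2 * n))
    have hi : i + 1 = 0 := by
      rw [← Nat.cast_add_one, Nat.sub_add_cancel (by omega), ZMod.natCast_self]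
    exact triple_pos_of_orient (hi ▸ hclosed i) (hi ▸ horient i) (hshort i)
  have h_alt (k : ℕ) (hk₂ : 2 ≤ k) (hk : k < 2 * n - 1) : h k * h (k + 1) < 0 := by
    have h0k : ((0 : ℕ) : ZMod (2 * n)) ≠ k :=
      ZMod.natCast_ne_natCast_of_lt (by omega) (by omega) (by omega)
    have h1k : ((1 : ℕ) : ZMod (2 * n)) ≠ k :=
      ZMod.natCast_ne_natCast_of_lt (by omega) (by omega) (by omega)
    have hk0 : ((k + 1 : ℕ) : ZMod (2 * n)) ≠ (0 : ℕ) :=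
      ZMod.natCast_ne_natCast_of_lt (by omega) (by omega) (by omega)
    push_cast at h0k h1k hk0
    obtain ⟨hne, x, -, ⟨u, -, rfl⟩, hxk⟩ := hcross 0 k h0k (by rwa [zero_add]) hk0
    rw [h_succ]
    exact triple_mul_triple_arcPt_neg (hframe k) (hframe 0) (hshort k).2 hne.symm hxk
      (triple_arcPt_self u)
  have h_alt_end := neg_one_pow_mul_pos_of_mul_succ_neg h_alt h_two (2 * n - 3) (by omega)
  rw [show 2 + (2 * n - 3) = 2 * n - 1 by omega, Odd.neg_one_pow ⟨n - 2, by omega⟩] at h_alt_end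
  linarith

/-- There is no closed cycle `e₁ … e₂ₙ` (`n ≥ 3`) of great-circle arcs, all of length `< π`
("short"), in which adjacent arcs meet only at their common endpoint, every
non-adjacent pair of arcs crosses transversally in exactly one point (they lie on distinct
great circles and the unique common point is interior to both), and all consecutive
crossing orientations `χ(eᵢ, eᵢ₊₁)` (the sign of the scalar triple product of the tangent
of `eᵢ` at the common endpoint, the tangent of `eᵢ₊₁` there, and the outward normal) are
equal to `+1`. -/
theorem stmt9 (n : ℕ) (hn : 3 ≤ n)
    (p q : ZMod (2 * n) → EuclideanSpace ℝ (Fin 3)) (L : ZMod (2 * n) → ℝ)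
    (hframe : ∀ i, IsFrame (p i) (q i))
    (hshort : ∀ i, 0 < L i ∧ L i < Real.pi)
    (hclosed : ∀ i, arcPt (p i) (q i) (L i) = p (i + 1))
    (hadj : ∀ i, arcSet (p i) (q i) (L i) ∩ arcSet (p (i + 1)) (q (i + 1)) (L (i + 1))
      = {p (i + 1)})
    (hcross : ∀ i j : ZMod (2 * n), i ≠ j → i + 1 ≠ j → j + 1 ≠ i →
      frameCircle (p i) (q i) ≠ frameCircle (p j) (q j) ∧
      ∃ x, arcSet (p i) (q i) (L i) ∩ arcSet (p j) (q j) (L j) = {x} ∧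
        x ∈ arcInt (p i) (q i) (L i) ∧ x ∈ arcInt (p j) (q j) (L j))
    (horient : ∀ i, 0 < triple (arcTangent (p i) (q i) (L i)) (q (i + 1)) (p (i + 1))) :
    False :=
  stmt9_general n hn p q L hframe hshort hclosed hcross horient
end

section
/- Let u_1, …, u_k be nonzero vectors in the plane R² with k ≥ 5, pairwise non-parallel. If 0 lies in the interior of the convex hull of {u_1, …, u_k}, then there exist at least three indices i such that the line through the origin in direction u_i separates two of the other vectors, i.e., there exist j, l ≠ i with u_j and u_l strictly on opposite sides of the line R·u_i. -/
/-!
A nonzero linear functional takes both signs on any set whose convex hull has `0` in its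
interior: otherwise the hull, and with it a neighbourhood of `0`, would lie in a closed
half-space. Applied to `det2 (u i)`, this shows that every `u i` separates two of the other
vectors, so all `k ≥ 5` indices qualify.
-/

/-- The determinant of two planar vectors. -/
def det2 (u w : EuclideanSpace ℝ (Fin 2)) : ℝ := u 0 * w 1 - u 1 * w 0

open Filter Topology

section ConvexHull

variable {E : Type*} [AddCommGroup E] [Module ℝ E] [TopologicalSpace E] [ContinuousSMul ℝ E]
  {s : Set E}

theorem exists_neg_of_zero_mem_interior_convexHull (hs : (0 : E) ∈ interior (convexHull ℝ s))
    {f : E →ₗ[ℝ] ℝ} (hf : f ≠ 0) : ∃ x ∈ s, f x < 0 := by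
  obtain ⟨v, hv⟩ := DFunLike.ne_iff.mp hf
  by_contra! hnonneg
  have hull_sub : convexHull ℝ s ⊆ {w | 0 ≤ f w} :=
    convexHull_min hnonneg (convex_halfSpace_ge f.isLinear 0)
  set w := -f v • v
  have hfw : f w < 0 := by
    simp only [w, map_smul, smul_eq_mul, neg_mul, Left.neg_neg_iff]
    exact mul_self_pos.mpr hv
  have near_zero : ∀ᶠ t : ℝ in 𝓝[>] 0, t • w ∈ convexHull ℝ s := by
    have hcont : Tendsto (fun t : ℝ => t • w) (𝓝 0) (𝓝 0) := by
      simpa using (tendsto_id (x := 𝓝 (0 : ℝ))).smul_const w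
    exact (hcont.eventually (mem_interior_iff_mem_nhds.mp hs)).filter_mono nhdsWithin_le_nhds
  obtain ⟨t, ht_mem, ht_pos⟩ := (near_zero.and self_mem_nhdsWithin).exists
  have : 0 ≤ t * f w := by simpa using hull_sub ht_mem
  exact (mul_neg_of_pos_of_neg ht_pos hfw).not_ge this

theorem exists_pos_of_zero_mem_interior_convexHull (hs : (0 : E) ∈ interior (convexHull ℝ s))
    {f : E →ₗ[ℝ] ℝ} (hf : f ≠ 0) : ∃ x ∈ s, 0 < f x := by
  obtain ⟨x, hx, hneg⟩ := exists_neg_of_zero_mem_interior_convexHull hs (neg_ne_zero.mpr hf)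
  exact ⟨x, hx, by simpa using hneg⟩

end ConvexHull


def det2Left (a : EuclideanSpace ℝ (Fin 2)) : EuclideanSpace ℝ (Fin 2) →ₗ[ℝ] ℝ where
  toFun := det2 a
  map_add' x y := by simp only [det2, PiLp.add_apply]; ring
  map_smul' c x := by simp only [det2, PiLp.smul_apply, smul_eq_mul, RingHom.id_apply]; ring

@[simp]
theorem det2Left_apply (a w : EuclideanSpace ℝ (Fin 2)) : det2Left a w = det2 a w := rfl

@[simp]
theorem det2_self (a : EuclideanSpace ℝ (Fin 2)) : det2 a a = 0 := by
  rw [det2]; ring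

theorem det2Left_ne_zero {a : EuclideanSpace ℝ (Fin 2)} (ha : a ≠ 0) : det2Left a ≠ 0 := by
  intro h
  have h0 := LinearMap.congr_fun h (EuclideanSpace.single 1 1)
  have h1 := LinearMap.congr_fun h (EuclideanSpace.single 0 1)
  simp only [det2Left_apply, det2, PiLp.single_eq_same, mul_one, ne_eq, zero_ne_one,
    not_false_eq_true, PiLp.single_eq_of_ne, mul_zero, sub_zero, LinearMap.zero_apply, one_ne_zero,
    zero_sub, neg_eq_zero] at h0 h1
  exact ha (by ext i; fin_cases i <;> simp [h0, h1])

theorem exists_separated_of_zero_mem_interior_convexHull {k : ℕ}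
    {u : Fin k → EuclideanSpace ℝ (Fin 2)}
    (hhull : (0 : EuclideanSpace ℝ (Fin 2)) ∈ interior (convexHull ℝ (Set.range u)))
    {i : Fin k} (hi : u i ≠ 0) :
    ∃ j l, j ≠ i ∧ l ≠ i ∧ 0 < det2 (u i) (u j) ∧ det2 (u i) (u l) < 0 := by
  obtain ⟨_, ⟨j, rfl⟩, hj⟩ := exists_pos_of_zero_mem_interior_convexHull hhull (det2Left_ne_zero hi)
  obtain ⟨_, ⟨l, rfl⟩, hl⟩ := exists_neg_of_zero_mem_interior_convexHull hhull (det2Left_ne_zero hi)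
  refine ⟨j, l, ?_, ?_, hj, hl⟩ <;> rintro rfl <;> simp_all

theorem stmt15_general (k : ℕ) (hk : 5 ≤ k) (u : Fin k → EuclideanSpace ℝ (Fin 2))
    (hne : ∀ i, u i ≠ 0)
    (hhull : (0 : EuclideanSpace ℝ (Fin 2)) ∈ interior (convexHull ℝ (Set.range u))) :
    3 ≤ {i : Fin k | ∃ j l, j ≠ i ∧ l ≠ i ∧
      0 < det2 (u i) (u j) ∧ det2 (u i) (u l) < 0}.ncard := by
  have huniv : {i : Fin k | ∃ j l, j ≠ i ∧ l ≠ i ∧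
      0 < det2 (u i) (u j) ∧ det2 (u i) (u l) < 0} = Set.univ :=
    Set.eq_univ_of_forall fun i => exists_separated_of_zero_mem_interior_convexHull hhull (hne i)
  rw [huniv, Set.ncard_univ, Nat.card_eq_fintype_card, Fintype.card_fin]
  omega

/-- Let `u₁, …, u_k` (`k ≥ 5`) be nonzero, pairwise non-parallel vectors of the plane.
If `0` lies in the interior of the convex hull of `{u₁, …, u_k}`, then there are at least
three indices `i` such that the line `ℝ·uᵢ` strictly separates two of the other vectors,
i.e. there exist `j, l ≠ i` with `det (uᵢ, u_j) > 0 > det (uᵢ, u_l)`. -/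
theorem stmt15 (k : ℕ) (hk : 5 ≤ k) (u : Fin k → EuclideanSpace ℝ (Fin 2))
    (hne : ∀ i, u i ≠ 0)
    (hpar : ∀ i j, i ≠ j → ¬ ∃ c : ℝ, u j = c • u i)
    (hhull : (0 : EuclideanSpace ℝ (Fin 2)) ∈ interior (convexHull ℝ (Set.range u))) :
    3 ≤ {i : Fin k | ∃ j l, j ≠ i ∧ l ≠ i ∧
      0 < det2 (u i) (u j) ∧ det2 (u i) (u l) < 0}.ncard :=
  stmt15_general k hk u hne hhull
end
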